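/- Let (R,m) be an F-finite reduced Noetherian local ring of prime characteristic p, let 𝔞 be an ideal of R with 𝔞 ∩ R^o ≠ ∅, and let t ≥ 0 be a real number. Suppose T is an ideal of R such that T ∩ R^o ≠ ∅; ψ(a·x) ∈ T for every e ≥ 1, every additive map ψ : R → R satisfying ψ(r^{p^e}·y) = r·ψ(y), every a ∈ 𝔞^{⌈t(p^e−1)⌉}, and every x ∈ T; and T ⊆ J for every ideal J with J ∩ R^o ≠ ∅ having the same stability property (so T is the test ideal of the Cartier algebra pair (R, C^{𝔞^t}), which equals Takagi's test ideal τ(R,𝔞^t)). Then T is a strong test ideal: T·(I*) = T·I for every ideal I of R. -/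
import Mathlib


/-- The `q`-th Frobenius power `I^{[q]}` of an ideal `I`: the ideal generated by
the `q`-th powers of the elements of `I`. -/
def frobeniusPower {R : Type*} [CommRing R] (I : Ideal R) (q : ℕ) : Ideal R :=
  Ideal.span ((fun a => a ^ q) '' (I : Set R))

/-- `Rreg c` means `c ∈ R^o`, i.e. `c` avoids every minimal prime of `R`. -/
def Rreg {R : Type*} [CommRing R] (c : R) : Prop :=
  ∀ P ∈ minimalPrimes R, c ∉ P

/-- `x` lies in the tight closure `I*` of `I` (characteristic `p`):
there is `c ∈ R^o` with `c * x^(p^e) ∈ I^{[p^e]}` for all `e ≫ 0`. -/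
def InTightClosure {R : Type*} [CommRing R] (p : ℕ) (I : Ideal R) (x : R) : Prop :=
  ∃ c, Rreg c ∧ ∃ N : ℕ, ∀ e ≥ N, c * x ^ p ^ e ∈ frobeniusPower I (p ^ e)

/-- The tight closure `I*` of `I`, as an ideal: the span of the set of elements in the
tight closure (this set is already an ideal, so taking the span is harmless). -/
def tightClosure {R : Type*} [CommRing R] (p : ℕ) (I : Ideal R) : Ideal R :=
  Ideal.span {x | InTightClosure p I x}

section Aux

variable {R : Type*} [CommRing R]

lemma mem_frobeniusPower_of_mem {I : Ideal R} {g : R} (hg : g ∈ I) (q : ℕ) :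
    g ^ q ∈ frobeniusPower I q :=
  Ideal.subset_span ⟨g, hg, rfl⟩

lemma frobeniusPower_one (I : Ideal R) : frobeniusPower I 1 = I := by
  apply le_antisymm
  · rw [frobeniusPower, Ideal.span_le]
    rintro x ⟨g, hg, rfl⟩
    simpa using hg
  · intro x hx
    simpa using mem_frobeniusPower_of_mem hx 1

lemma frobeniusPower_le_self (I : Ideal R) {q : ℕ} (hq : 1 ≤ q) : frobeniusPower I q ≤ I := by
  rw [frobeniusPower, Ideal.span_le]
  rintro x ⟨g, hg, rfl⟩
  simp only [SetLike.mem_coe]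
  obtain ⟨m, rfl⟩ := Nat.exists_eq_add_of_le hq
  rw [pow_add, pow_one]
  exact I.mul_mem_right _ hg

lemma frobeniusPower_mul_le (I : Ideal R) (a b : ℕ) :
    frobeniusPower I (a * b) ≤ frobeniusPower (frobeniusPower I a) b := by
  rw [frobeniusPower, Ideal.span_le]
  rintro x ⟨g, hg, rfl⟩
  simp only [SetLike.mem_coe]
  rw [pow_mul]
  exact mem_frobeniusPower_of_mem (mem_frobeniusPower_of_mem hg a) b

lemma minimalPrimes_isPrime {P : Ideal R} (hP : P ∈ minimalPrimes R) : P.IsPrime := by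
  have hP' : Minimal (fun q : Ideal R => q.IsPrime ∧ ⊥ ≤ q) P := hP
  exact hP'.1.1

lemma Rreg.mul {a b : R} (ha : Rreg a) (hb : Rreg b) : Rreg (a * b) := by
  intro P hP hmem
  rcases (minimalPrimes_isPrime hP).mem_or_mem hmem with h | h
  · exact ha P hP h
  · exact hb P hP h

lemma Rreg_one : Rreg (1 : R) := by
  intro P hP h
  exact (minimalPrimes_isPrime hP).ne_top ((Ideal.eq_top_iff_one _).mpr h)

lemma eq_zero_of_mem_all_minimalPrimes [IsReduced R] {x : R}
    (hx : ∀ P ∈ minimalPrimes R, x ∈ P) : x = 0 := by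
  have hnil : x ∈ nilradical R := by
    rw [nilradical_eq_sInf, Ideal.mem_sInf]
    intro J hJ
    haveI : J.IsPrime := hJ
    obtain ⟨Q, hQ, hQJ⟩ := Ideal.exists_minimalPrimes_le (I := ⊥) (J := J) bot_le
    exact hQJ (hx Q hQ)
  exact (mem_nilradical.mp hnil).eq_zero

lemma exists_g [IsNoetherianRing R] {P : Ideal R} (hP : P ∈ minimalPrimes R) :
    ∃ g : R, g ∉ P ∧ ∀ Q ∈ minimalPrimes R, Q ≠ P → g ∈ Q := by
  classical
  have hfin := minimalPrimes.finite_of_isNoetherianRing (R := R)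
  by_contra h
  push_neg at h
  have hle : (hfin.toFinset.erase P).inf id ≤ P := by
    intro g hg
    by_contra hgP
    obtain ⟨Q, hQ, hQP, hgQ⟩ := h g hgP
    have hQe : Q ∈ hfin.toFinset.erase P :=
      Finset.mem_erase.mpr ⟨hQP, hfin.mem_toFinset.mpr hQ⟩
    exact hgQ ((Finset.inf_le (f := id) hQe) hg)
  obtain ⟨Q, hQe, hQle⟩ := ((minimalPrimes_isPrime hP).inf_le').mp hle
  obtain ⟨hQne, hQmem⟩ := Finset.mem_erase.mp hQe
  have hQmin : Q ∈ minimalPrimes R := hfin.mem_toFinset.mp hQmem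
  have hP' : Minimal (fun q : Ideal R => q.IsPrime ∧ ⊥ ≤ q) P := hP
  have hPQ : P ≤ Q := hP'.2 ⟨minimalPrimes_isPrime hQmin, bot_le⟩ hQle
  exact hQne (le_antisymm hQle hPQ)

/-- The key induction: if `z` has a tight-closure certificate `(c, n)` for `I`,
then `T·z ⊆ T·I`, where `T` is the minimal stable ideal meeting `R^o`. -/
theorem claim [IsNoetherianRing R] [IsReduced R]
    (p : ℕ) (hp2 : 2 ≤ p)
    (A : ℕ → Ideal R) (T : Ideal R)
    (hTreg : ∃ c ∈ T, Rreg c)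
    (hTcomp : ∀ e : ℕ, 1 ≤ e → ∀ ψ : R →+ R,
      (∀ r y : R, ψ (r ^ p ^ e * y) = r * ψ y) →
      ∀ a ∈ A e, ∀ x ∈ T, ψ (a * x) ∈ T)
    (hTmin : ∀ J : Ideal R, (∃ c ∈ J, Rreg c) →
      (∀ e : ℕ, 1 ≤ e → ∀ ψ : R →+ R,
        (∀ r y : R, ψ (r ^ p ^ e * y) = r * ψ y) →
        ∀ a ∈ A e, ∀ x ∈ J, ψ (a * x) ∈ J) → T ≤ J) :
    ∀ n : ℕ, ∀ (I : Ideal R) (c z : R), Rreg c →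
      (∀ e ≥ n, c * z ^ p ^ e ∈ frobeniusPower I (p ^ e)) →
      ∀ u ∈ T, u * z ∈ T * I := by
  classical
  intro n
  induction n using Nat.strong_induction_on with
  | _ n IH =>
  intro I c z hc hcz u hu
  obtain ⟨t₀, ht₀T, ht₀⟩ := hTreg
  -- The invariant ideal J
  set J : Ideal R :=
    { carrier := {w | ∀ j : ℕ, w * z ^ p ^ j ∈ T * frobeniusPower I (p ^ j)}
      add_mem' := fun h1 h2 j => by rw [add_mul]; exact add_mem (h1 j) (h2 j)
      zero_mem' := fun j => by rw [zero_mul]; exact zero_mem _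
      smul_mem' := fun r w hw j => by
        rw [smul_eq_mul, mul_assoc]; exact Ideal.mul_mem_left _ r (hw j) } with hJdef
  have memJ : ∀ w : R, w ∈ J ↔ ∀ j : ℕ,
      w * z ^ p ^ j ∈ T * frobeniusPower I (p ^ j) := fun w => Iff.rfl
  -- the peeling lemma
  have peel : ∀ e : ℕ, 1 ≤ e → ∀ ψ : R →+ R,
      (∀ r y : R, ψ (r ^ p ^ e * y) = r * ψ y) →
      ∀ a ∈ A e, ∀ j : ℕ, ∀ m ∈ T * frobeniusPower I (p ^ (j + e)),
      ψ (a * m) ∈ T * frobeniusPower I (p ^ j) := by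
    intro e he ψ hψ a ha j m hm
    have inner : ∀ y ∈ frobeniusPower I (p ^ (j + e)), ∀ x ∈ T,
        ψ (a * (x * y)) ∈ T * frobeniusPower I (p ^ j) := by
      intro y hy
      induction hy using Submodule.span_induction with
      | mem g hg =>
        obtain ⟨g₀, hg₀, rfl⟩ := hg
        intro x hx
        have h1 : a * (x * g₀ ^ p ^ (j + e)) = (g₀ ^ p ^ j) ^ p ^ e * (a * x) := by
          rw [← pow_mul, ← pow_add]; ring
        show ψ (a * (x * g₀ ^ p ^ (j + e))) ∈ T * frobeniusPower I (p ^ j)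
        rw [h1, hψ, mul_comm (g₀ ^ p ^ j) (ψ (a * x))]
        exact Ideal.mul_mem_mul (hTcomp e he ψ hψ a ha x hx)
          (mem_frobeniusPower_of_mem hg₀ _)
      | zero => intro x hx; simp
      | add y₁ y₂ hy₁ hy₂ ih₁ ih₂ =>
        intro x hx
        have h2 : a * (x * (y₁ + y₂)) = a * (x * y₁) + a * (x * y₂) := by ring
        rw [h2, map_add]
        exact add_mem (ih₁ x hx) (ih₂ x hx)
      | smul r y' hy' ih =>
        intro x hx
        have h3 : a * (x * (r • y')) = a * ((x * r) * y') := by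
          rw [smul_eq_mul]; ring
        rw [h3]
        exact ih (x * r) (Ideal.mul_mem_right r T hx)
    exact Submodule.mul_induction_on hm (fun x hx y hy => inner y hy x hx)
      (fun x y cx cy => by rw [mul_add, map_add]; exact add_mem cx cy)
  -- J is stable
  have hJstab : ∀ e : ℕ, 1 ≤ e → ∀ ψ : R →+ R,
      (∀ r y : R, ψ (r ^ p ^ e * y) = r * ψ y) →
      ∀ a ∈ A e, ∀ w ∈ J, ψ (a * w) ∈ J := by
    intro e he ψ hψ a ha w hw
    rw [memJ]
    intro j
    have hw' := (memJ w).mp hw (j + e)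
    have harg : (z ^ p ^ j) ^ p ^ e * (a * w) = a * (w * z ^ p ^ (j + e)) := by
      rw [← pow_mul, ← pow_add]; ring
    have h1 : ψ (a * w) * z ^ p ^ j = ψ (a * (w * z ^ p ^ (j + e))) := by
      rw [mul_comm, ← hψ (z ^ p ^ j) (a * w), harg]
    rw [h1]
    exact peel e he ψ hψ a ha j _ hw'
  -- construct the regular multiplier f
  obtain ⟨f, hfreg, hf0, hfbig⟩ :
      ∃ f : R, Rreg f ∧ f * z ∈ I ∧
        ∀ j : ℕ, n ≤ j → f * z ^ p ^ j ∈ frobeniusPower I (p ^ j) := by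
    rcases Nat.eq_zero_or_pos n with hn | hn
    · subst hn
      refine ⟨c, hc, ?_, fun j _ => hcz j (Nat.zero_le j)⟩
      have h0 := hcz 0 le_rfl
      simpa [frobeniusPower_one] using h0
    · -- n ≥ 1
      have hfin := minimalPrimes.finite_of_isNoetherianRing (R := R)
      set Sfin : Finset (Ideal R) := hfin.toFinset.filter (fun P => z ∈ P) with hSfin
      have hmemS : ∀ P ∈ Sfin, P ∈ minimalPrimes R ∧ z ∈ P := by
        intro P hP
        have := Finset.mem_filter.mp hP
        exact ⟨hfin.mem_toFinset.mp this.1, this.2⟩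
      have hgex : ∀ P ∈ Sfin, ∃ g : R, g ∉ P ∧ ∀ Q ∈ minimalPrimes R, Q ≠ P → g ∈ Q :=
        fun P hP => exists_g (hmemS P hP).1
      choose! gfun hg1 hg2 using hgex
      have h2n : 2 ≤ p ^ n := le_trans hp2 (Nat.le_self_pow (by omega) p)
      -- the sum of the g's kills z
      have hsz : (∑ P ∈ Sfin, gfun P) * z = 0 := by
        rw [Finset.sum_mul]
        apply Finset.sum_eq_zero
        intro P hP
        apply eq_zero_of_mem_all_minimalPrimes
        intro Q hQ
        by_cases hQP : Q = P
        · subst hQP; exact Q.mul_mem_left _ (hmemS Q hP).2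
        · exact Q.mul_mem_right _ (hg2 P hP Q hQ hQP)
      have hszj : ∀ j : ℕ, (∑ P ∈ Sfin, gfun P) * z ^ p ^ j = 0 := by
        intro j
        have h1 : 1 ≤ p ^ j := Nat.one_le_pow _ _ (by omega)
        have h2 : z ^ p ^ j = z * z ^ (p ^ j - 1) := by
          rw [← pow_succ']
          congr 1
          omega
        rw [h2, ← mul_assoc, hsz, zero_mul]
      refine ⟨c * z ^ (p ^ n - 1) + ∑ P ∈ Sfin, gfun P, ?_, ?_, ?_⟩
      · -- regularity
        intro P hP hmem
        by_cases hzP : z ∈ P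
        · have hPS : P ∈ Sfin := Finset.mem_filter.mpr ⟨hfin.mem_toFinset.mpr hP, hzP⟩
          have hzk : z ^ (p ^ n - 1) ∈ P := Ideal.pow_mem_of_mem P hzP _ (by omega)
          have hsplit : ∑ Q ∈ Sfin, gfun Q = gfun P + ∑ Q ∈ Sfin.erase P, gfun Q :=
            (Finset.add_sum_erase _ _ hPS).symm
          have herase : ∑ Q ∈ Sfin.erase P, gfun Q ∈ P := by
            apply Ideal.sum_mem
            intro Q hQ
            exact hg2 Q (Finset.mem_of_mem_erase hQ) P hP
              (Ne.symm (Finset.ne_of_mem_erase hQ))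
          have hgP : gfun P ∈ P := by
            have h5 : gfun P = (c * z ^ (p ^ n - 1) + ∑ Q ∈ Sfin, gfun Q)
                - c * z ^ (p ^ n - 1) - ∑ Q ∈ Sfin.erase P, gfun Q := by
              rw [hsplit]; ring
            rw [h5]
            exact sub_mem (sub_mem hmem (Ideal.mul_mem_left _ _ hzk)) herase
          exact hg1 P hPS hgP
        · have hsum : ∑ Q ∈ Sfin, gfun Q ∈ P := by
            apply Ideal.sum_mem
            intro Q hQS
            have hne : P ≠ Q := fun h => hzP (h ▸ (hmemS Q hQS).2)
            exact hg2 Q hQS P hP hne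
          have hcz' : c * z ^ (p ^ n - 1) ∈ P := by
            have h6 : c * z ^ (p ^ n - 1) =
                (c * z ^ (p ^ n - 1) + ∑ Q ∈ Sfin, gfun Q) - ∑ Q ∈ Sfin, gfun Q := by ring
            rw [h6]
            exact sub_mem hmem hsum
          rcases (minimalPrimes_isPrime hP).mem_or_mem hcz' with h | h
          · exact hc P hP h
          · exact hzP ((minimalPrimes_isPrime hP).mem_of_pow_mem _ h)
      · -- f * z ∈ I
        have h7 : (c * z ^ (p ^ n - 1) + ∑ P ∈ Sfin, gfun P) * z = c * z ^ p ^ n := by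
          rw [add_mul, hsz, add_zero, mul_assoc, ← pow_succ]
          congr 2
          omega
        rw [h7]
        exact frobeniusPower_le_self I (by omega) (hcz n le_rfl)
      · -- f * z ^ p ^ j ∈ I^{[p^j]} for j ≥ n
        intro j hj
        have h8 : (c * z ^ (p ^ n - 1) + ∑ P ∈ Sfin, gfun P) * z ^ p ^ j =
            z ^ (p ^ n - 1) * (c * z ^ p ^ j) + (∑ P ∈ Sfin, gfun P) * z ^ p ^ j := by ring
        rw [h8, hszj j, add_zero]
        exact Ideal.mul_mem_left _ _ (hcz j hj)
  -- d := t₀ * f belongs to J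
  have hdJ : t₀ * f ∈ J := by
    rw [memJ]
    intro j
    rcases Nat.eq_zero_or_pos j with hj0 | hj1
    · subst hj0
      simp only [pow_zero, pow_one, frobeniusPower_one]
      rw [mul_assoc]
      exact Ideal.mul_mem_mul ht₀T hf0
    rcases le_or_gt n j with hnj | hjn
    · rw [mul_assoc]
      exact Ideal.mul_mem_mul ht₀T (hfbig j hnj)
    · -- 1 ≤ j < n : use the induction hypothesis
      have hyp : ∀ e ≥ n - j, c * (z ^ p ^ j) ^ p ^ e ∈
          frobeniusPower (frobeniusPower I (p ^ j)) (p ^ e) := by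
        intro e hee
        have h2 : c * z ^ p ^ (j + e) ∈ frobeniusPower I (p ^ (j + e)) :=
          hcz (j + e) (by omega)
        have h3 : frobeniusPower I (p ^ (j + e)) ≤
            frobeniusPower (frobeniusPower I (p ^ j)) (p ^ e) := by
          rw [pow_add]
          exact frobeniusPower_mul_le I _ _
        have h4 : (z ^ p ^ j) ^ p ^ e = z ^ p ^ (j + e) := by
          rw [← pow_mul, ← pow_add]
        rw [h4]
        exact h3 h2
      exact IH (n - j) (by omega) (frobeniusPower I (p ^ j)) c (z ^ p ^ j) hc hyp
        (t₀ * f) (Ideal.mul_mem_right f T ht₀T)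
  -- conclude
  have hTle : T ≤ J := hTmin J ⟨t₀ * f, hdJ, ht₀.mul hfreg⟩ hJstab
  have hfin := (memJ u).mp (hTle hu) 0
  simpa [frobeniusPower_one] using hfin

end Aux

/-- **Takagi.** The test ideal `τ(R, 𝔞^t)` of the Cartier algebra pair
`(R, C^{𝔞^t})`, i.e. the smallest ideal `T` meeting `R^o` with `ψ(a·x) ∈ T` for all
`p^{-e}`-linear `ψ`, all `a ∈ 𝔞^{⌈t(p^e−1)⌉}` and `x ∈ T`, is a strong test ideal. -/
theorem takagi_test_ideal_is_strong_test_ideal {R : Type*} [CommRing R] [IsNoetherianRing R]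
    [IsLocalRing R] [IsReduced R] (p : ℕ) [Fact p.Prime] [CharP R p]
    (hFF : (frobenius R p).Finite)
    (𝔞 : Ideal R) (h𝔞 : ∃ c ∈ 𝔞, Rreg c)
    (t : ℝ) (ht : 0 ≤ t)
    (T : Ideal R)
    (hTreg : ∃ c ∈ T, Rreg c)
    (hTcomp : ∀ e : ℕ, 1 ≤ e → ∀ ψ : R →+ R,
      (∀ r y : R, ψ (r ^ p ^ e * y) = r * ψ y) →
      ∀ a ∈ 𝔞 ^ ⌈t * ((p ^ e - 1 : ℕ) : ℝ)⌉₊, ∀ x ∈ T, ψ (a * x) ∈ T)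
    (hTmin : ∀ J : Ideal R, (∃ c ∈ J, Rreg c) →
      (∀ e : ℕ, 1 ≤ e → ∀ ψ : R →+ R,
        (∀ r y : R, ψ (r ^ p ^ e * y) = r * ψ y) →
        ∀ a ∈ 𝔞 ^ ⌈t * ((p ^ e - 1 : ℕ) : ℝ)⌉₊, ∀ x ∈ J, ψ (a * x) ∈ J) → T ≤ J) :
    ∀ I : Ideal R, T * tightClosure p I = T * I := by
  intro I
  have hp2 : 2 ≤ p := (Fact.out : p.Prime).two_le
  have key := claim p hp2 (fun e => 𝔞 ^ ⌈t * ((p ^ e - 1 : ℕ) : ℝ)⌉₊) T hTreg hTcomp hTmin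
  apply le_antisymm
  · rw [Ideal.mul_le]
    intro u hu v hv
    rw [tightClosure] at hv
    induction hv using Submodule.span_induction with
    | mem z hz =>
      obtain ⟨c, hc, N, hN⟩ := hz
      exact key N I c z hc hN u hu
    | zero => simp
    | add x y hx hy ihx ihy => rw [mul_add]; exact add_mem ihx ihy
    | smul r x hx ih =>
      have h1 : u * (r • x) = r • (u * x) := by
        rw [smul_eq_mul, smul_eq_mul]; ring
      rw [h1]
      exact Submodule.smul_mem _ r ih
  · rw [Ideal.mul_le]
    intro u hu v hv
    refine Ideal.mul_mem_mul hu (Ideal.subset_span ?_)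
    exact ⟨1, Rreg_one, 0, fun e _ => by
      simpa using mem_frobeniusPower_of_mem hv (p ^ e)⟩
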